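/- Let B be a finite type with decidable equality, k ∈ B, L : B → B → ℤ a skew-symmetric matrix (L(b,c) = −L(c,b) for all b, c), and w ∈ ℤ[B] with w(k) = 0 satisfying the compatibility condition Σ_{c∈B} L(b,c)·w(c) = 1 if b = k and = 0 if b ≠ k. Let E_k^+ be the plus dual mutation map built from w, and let E'^+_k be the plus dual mutation map built from −w (the mutated exchange row). Then double mutation returns the original form up to the canonical relabelling: ⟨E_k^+(E'^+_k(u)), E_k^+(E'^+_k(v))⟩_L = ⟨u, v⟩_L for all u, v ∈ ℤ[B]. (Proposition 4.20 of the paper: mutation of the form ⟨-,-⟩_λ is involutive up to the canonical relabelling ν.) -/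
import Mathlib


/-- The tropical mutation map `μ_k^±`, determined on the standard basis by
`e_b ↦ e_b + u b • e_k` for `b ≠ k` and `e_k ↦ -e_k`, where `u b = [w b]₊` (resp. `[w b]₋`). -/
noncomputable def mutL {B : Type*} [Fintype B] [DecidableEq B] (k : B) (u : B → ℤ) :
    (B →₀ ℤ) →ₗ[ℤ] (B →₀ ℤ) :=
  Finsupp.linearCombination ℤ
    (fun b => if b = k then -(Finsupp.single k 1)
              else Finsupp.single b 1 + u b • Finsupp.single k 1)

/-- The dual mutation map `E_k^±`, determined on the standard basis by `e_b ↦ e_b` for `b ≠ k`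
and `e_k ↦ wp − e_k`, where `wp = [w]₊` (resp. `[w]₋`). -/
noncomputable def mutE {B : Type*} [Fintype B] [DecidableEq B] (k : B) (wp : B →₀ ℤ) :
    (B →₀ ℤ) →ₗ[ℤ] (B →₀ ℤ) :=
  Finsupp.linearCombination ℤ
    (fun b => if b = k then wp - Finsupp.single k 1 else Finsupp.single b 1)

/-- Pointwise positive part `[w]₊` of `w : B →₀ ℤ`. -/
noncomputable def fPos {B : Type*} (w : B →₀ ℤ) : B →₀ ℤ :=
  Finsupp.mapRange (fun n => max n 0) (by simp) w

/-- Pointwise negative part `[w]₋` of `w : B →₀ ℤ`. -/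
noncomputable def fNeg {B : Type*} (w : B →₀ ℤ) : B →₀ ℤ :=
  Finsupp.mapRange (fun n => max (-n) 0) (by simp) w

/-- The standard pairing `⟪u,v⟫ = Σ_b u(b)·v(b)` on `ℤ[B]`. -/
def pairB {B : Type*} [Fintype B] (u v : B →₀ ℤ) : ℤ := ∑ b : B, u b * v b

/-- The bilinear extension `⟨x,y⟩_M = Σ_{b,c} x(b)·M(b,c)·y(c)` of a matrix `M`. -/
def formM {B : Type*} [Fintype B] (M : B → B → ℤ) (x y : B →₀ ℤ) : ℤ :=
  ∑ b : B, ∑ c : B, x b * M b c * y c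

lemma mutE_apply' {B : Type*} [Fintype B] [DecidableEq B] (k : B) (wp x : B →₀ ℤ) :
    mutE k wp x = x + x k • wp - (2 * x k) • Finsupp.single k 1 := by
  have h : mutE k wp = LinearMap.id +
      (Finsupp.lapply k).smulRight (wp - (2:ℤ) • Finsupp.single k 1) := by
    apply Finsupp.lhom_ext
    intro a b
    simp only [mutE, Finsupp.linearCombination_single, LinearMap.add_apply, LinearMap.id_apply,
      LinearMap.smulRight_apply, Finsupp.lapply_apply, Finsupp.single_apply]
    by_cases hak : a = k
    · subst hak
      ext c
      simp [Finsupp.single_apply]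
      split <;> ring
    · simp [hak, Finsupp.single_apply]
  rw [h]
  simp only [LinearMap.add_apply, LinearMap.id_apply, LinearMap.smulRight_apply,
    Finsupp.lapply_apply]
  module

lemma fPos_sub {B : Type*} (w : B →₀ ℤ) : fPos (-w) = fPos w - w := by
  ext b
  simp [fPos]
  omega

lemma mutE_comp {B : Type*} [Fintype B] [DecidableEq B] (k : B) (w : B →₀ ℤ) (hw : w k = 0)
    (x : B →₀ ℤ) :
    mutE k (fPos w) (mutE k (fPos (-w)) x) = x - x k • w := by
  have h2 : fPos (-w) k = 0 := by simp [fPos, hw]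
  rw [mutE_apply', mutE_apply']
  have hval : ((x + x k • fPos (-w) - (2 * x k) • Finsupp.single k 1 : B →₀ ℤ)) k = -x k := by
    simp [h2, Finsupp.single_apply]
    ring
  rw [hval, fPos_sub]
  module

/-- Proposition 4.20: for `L` skew-symmetric and `w` compatible with `L`,
double mutation of the form `⟨-,-⟩_λ` — first along the plus dual mutation map built from `−w`
(the mutated exchange row), then along the one built from `w` — returns the original form,
up to the canonical relabelling. -/
theorem lambdaForm_involutive {B : Type*} [Fintype B] [DecidableEq B] (k : B)
    (L : B → B → ℤ) (hLskew : ∀ b c : B, L b c = -(L c b))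
    (w : B →₀ ℤ) (hw : w k = 0)
    (hcompat : ∀ b : B, (∑ c : B, L b c * w c) = if b = k then 1 else 0) :
    ∀ u v : B →₀ ℤ,
      formM L (mutE k (fPos w) (mutE k (fPos (-w)) u))
              (mutE k (fPos w) (mutE k (fPos (-w)) v))
        = formM L u v := by
  have hxw : ∀ x : B →₀ ℤ, formM L x w = x k := by
    intro x
    unfold formM
    simp_rw [mul_assoc, ← Finset.mul_sum, hcompat]
    simp
  have hwy : ∀ y : B →₀ ℤ, formM L w y = -y k := by
    intro y
    unfold formM
    rw [Finset.sum_comm]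
    have hinner : ∀ c : B, (∑ b : B, w b * L b c * y c)
        = -((if c = k then 1 else 0) * y c) := by
      intro c
      rw [← hcompat c, Finset.sum_mul, ← Finset.sum_neg_distrib]
      exact Finset.sum_congr rfl fun b _ => by rw [hLskew b c]; ring
    simp_rw [hinner]
    simp
  have expand : ∀ x y : B →₀ ℤ,
      formM L (x - x k • w) (y - y k • w)
        = formM L x y - x k * formM L w y - y k * formM L x w
            + x k * y k * formM L w w := by
    intro x y
    simp only [formM, Finsupp.sub_apply, Finsupp.smul_apply, smul_eq_mul]
    have hterm : ∀ b c : B,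
        (x b - x k * w b) * L b c * (y c - y k * w c)
          = x b * L b c * y c - x k * (w b * L b c * y c)
              - y k * (x b * L b c * w c) + x k * y k * (w b * L b c * w c) := by
      intro b c
      ring
    simp_rw [hterm, Finset.sum_add_distrib, Finset.sum_sub_distrib, ← Finset.mul_sum]
  intro u v
  rw [mutE_comp k w hw, mutE_comp k w hw, expand, hxw, hxw, hwy, hw]
  ring
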